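/- Let ε₀ ≥ 0, k ≥ 1, and t := e^{ε₀}/(e^{ε₀}+1). Let b be a random vector in {0,1}^k with an arbitrary distribution, and let b̃ be obtained from b by applying the random response mechanism with parameter ε₀ independently to each coordinate (conditionally on b). Define ẑ := 1 if all coordinates of b equal 1 and ẑ := 0 otherwise, and define z̃ analogously from b̃. Let α̂ := Pr[ẑ = 0]. Then Pr[z̃ = ẑ] ≥ t^k·(1 − α̂) + t·α̂ ≥ t·α̂. In particular, if α̂ = α(1 − δ_err) then Pr[z̃ = ẑ] ≥ t·α·(1 − δ_err). -/

import Mathlib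

/-!
Conditionally on `b = u`, the two indicators agree with probability exactly `t ^ k` when
`u` is all ones (every coordinate must survive), and otherwise with probability
`1 - Pr[b̃ = 1…1]`; since some coordinate of `u` is `0`, that event needs this coordinate to
be flipped, so its probability is at most `1 - t`. Averaging the two conditional bounds
over `u ∼ q` gives `t ^ k (1 - α̂) + t α̂`.
-/

/-- Probability that the random response mechanism with parameter `ε₀`
outputs the bit `v` on input bit `b`. -/
noncomputable def rrProb (ε₀ : ℝ) (b v : Bool) : ℝ :=
  if v = b then Real.exp ε₀ / (Real.exp ε₀ + 1) else 1 / (Real.exp ε₀ + 1)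

/-- `Pr[z̃ = ẑ]`: the probability that the all-ones indicator of the perturbed
vector `b̃` (each coordinate of `b ∼ q` flipped independently via random
response with parameter `ε₀`) agrees with the all-ones indicator of `b`. -/
noncomputable def matchProb (ε₀ : ℝ) (k : ℕ) (q : (Fin k → Bool) → ℝ) : ℝ :=
  ∑ u : Fin k → Bool, q u * ∑ v : Fin k → Bool, if ((∀ j, v j = true) ↔ (∀ j, u j = true))
      then ∏ j, rrProb ε₀ (u j) (v j) else 0

open Finset

section RandomResponse

variable (ε₀ : ℝ)

lemma rrProb_nonneg (b v : Bool) : 0 ≤ rrProb ε₀ b v := by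
  unfold rrProb; split <;> positivity

lemma rrProb_self (b : Bool) : rrProb ε₀ b b = Real.exp ε₀ / (Real.exp ε₀ + 1) := if_pos rfl

lemma rrProb_false_true : rrProb ε₀ false true = 1 - Real.exp ε₀ / (Real.exp ε₀ + 1) := by
  have : Real.exp ε₀ + 1 ≠ 0 := by positivity
  simp only [rrProb, Bool.true_eq_false, if_false]
  field_simp
  ring

lemma sum_rrProb (b : Bool) : ∑ v, rrProb ε₀ b v = 1 := by
  have h : Real.exp ε₀ / (Real.exp ε₀ + 1) + 1 / (Real.exp ε₀ + 1) = 1 := by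
    rw [← add_div, div_self (by positivity)]
  cases b
  · simpa [rrProb, add_comm] using h
  · simpa [rrProb] using h

lemma rrProb_le_one (b v : Bool) : rrProb ε₀ b v ≤ 1 := by
  rw [← sum_rrProb ε₀ b]
  exact single_le_sum (fun w _ => rrProb_nonneg ε₀ b w) (mem_univ v)

end RandomResponse

section Perturbation

variable {ι : Type*} [Fintype ι] [DecidableEq ι] (ε₀ : ℝ)

lemma sum_prod_rrProb (u : ι → Bool) : ∑ v : ι → Bool, ∏ j, rrProb ε₀ (u j) (v j) = 1 := by
  rw [← Fintype.prod_sum]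
  exact prod_eq_one fun j _ => sum_rrProb ε₀ (u j)

lemma prod_le_apply_of_nonneg_of_le_one {f : ι → ℝ} (h0 : ∀ j, 0 ≤ f j) (h1 : ∀ j, f j ≤ 1)
    (i : ι) : ∏ j, f j ≤ f i := by
  rw [← mul_prod_erase univ f (mem_univ i)]
  exact mul_le_of_le_one_right (h0 i) (prod_le_one (fun j _ => h0 j) (fun j _ => h1 j))

lemma prod_rrProb_true_le {u : ι → Bool} {i : ι} (hi : u i = false) :
    ∏ j, rrProb ε₀ (u j) true ≤ 1 - Real.exp ε₀ / (Real.exp ε₀ + 1) := by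
  calc ∏ j, rrProb ε₀ (u j) true
      ≤ rrProb ε₀ (u i) true :=
        prod_le_apply_of_nonneg_of_le_one (fun _ => rrProb_nonneg ε₀ _ _)
          (fun _ => rrProb_le_one ε₀ _ _) i
    _ = _ := by rw [hi, rrProb_false_true]

/-- `Pr[z̃ = ẑ | b = u]`. -/
noncomputable def condMatchProb (u : ι → Bool) : ℝ :=
  ∑ v : ι → Bool, if ((∀ j, v j = true) ↔ (∀ j, u j = true))
    then ∏ j, rrProb ε₀ (u j) (v j) else 0

lemma sum_ite_forall_true (g : (ι → Bool) → ℝ) :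
    (∑ v : ι → Bool, if ∀ j, v j = true then g v else 0) = g fun _ => true := by
  rw [sum_eq_single_of_mem (fun _ => true) (mem_univ _)]
  · simp
  · intro v _ hv
    exact if_neg fun h => hv (funext h)

lemma condMatchProb_of_forall_true {u : ι → Bool} (hu : ∀ j, u j = true) :
    condMatchProb ε₀ u = (Real.exp ε₀ / (Real.exp ε₀ + 1)) ^ Fintype.card ι := by
  simp only [condMatchProb, hu, implies_true, iff_true, sum_ite_forall_true, rrProb_self,
    prod_const, card_univ]

lemma condMatchProb_of_not_forall_true {u : ι → Bool} (hu : ¬∀ j, u j = true) :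
    condMatchProb ε₀ u = 1 - ∏ j, rrProb ε₀ (u j) true := by
  have hsplit : condMatchProb ε₀ u = ∑ v : ι → Bool, (∏ j, rrProb ε₀ (u j) (v j) -
      if ∀ j, v j = true then ∏ j, rrProb ε₀ (u j) (v j) else 0) := by
    refine sum_congr rfl fun v _ => ?_
    by_cases hv : ∀ j, v j = true <;> simp [hv, hu]
  rw [hsplit, sum_sub_distrib, sum_prod_rrProb, sum_ite_forall_true]

lemma le_condMatchProb_of_not_forall_true {u : ι → Bool} (hu : ¬∀ j, u j = true) :
    Real.exp ε₀ / (Real.exp ε₀ + 1) ≤ condMatchProb ε₀ u := by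
  obtain ⟨i, hi⟩ := not_forall.mp hu
  have := prod_rrProb_true_le ε₀ (Bool.eq_false_iff.mpr hi)
  rw [condMatchProb_of_not_forall_true ε₀ hu]
  linarith

end Perturbation

lemma matchProb_eq_sum_condMatchProb (ε₀ : ℝ) (k : ℕ) (q : (Fin k → Bool) → ℝ) :
    matchProb ε₀ k q = ∑ u, q u * condMatchProb ε₀ u := by
  unfold matchProb condMatchProb
  congr!

lemma sum_mul_ite_eq {α : Type*} [Fintype α] (P : α → Prop) [DecidablePred P] (q : α → ℝ)
    (a b : ℝ) :
    ∑ u, q u * (if P u then a else b) =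
      a * ∑ u, (if P u then q u else 0) + b * ∑ u, (if ¬P u then q u else 0) := by
  rw [mul_sum, mul_sum, ← sum_add_distrib]
  refine sum_congr rfl fun u _ => ?_
  by_cases h : P u <;> simp [h, mul_comm]

lemma sum_ite_add_sum_ite_not {α : Type*} [Fintype α] (P : α → Prop) [DecidablePred P]
    (q : α → ℝ) :
    ∑ u, (if P u then q u else 0) + ∑ u, (if ¬P u then q u else 0) = ∑ u, q u := by
  rw [← sum_add_distrib]
  refine sum_congr rfl fun u _ => ?_
  by_cases h : P u <;> simp [h]

theorem stmt_13_general (ε₀ : ℝ) (k : ℕ)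
    (t : ℝ) (ht : t = Real.exp ε₀ / (Real.exp ε₀ + 1))
    (q : (Fin k → Bool) → ℝ) (hq0 : ∀ u, 0 ≤ q u) (hq1 : ∑ u, q u = 1)
    (αhat : ℝ) (hαhat : αhat = ∑ u, if ¬ (∀ j, u j = true) then q u else 0) :
    matchProb ε₀ k q ≥ t ^ k * (1 - αhat) + t * αhat ∧
    matchProb ε₀ k q ≥ t * αhat ∧
    (∀ α δerr : ℝ, αhat = α * (1 - δerr) →
      matchProb ε₀ k q ≥ t * α * (1 - δerr)) := by
  have hcond : ∀ u : Fin k → Bool,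
      (if ∀ j, u j = true then t ^ k else t) ≤ condMatchProb ε₀ u := by
    intro u
    split_ifs with hu
    · rw [condMatchProb_of_forall_true ε₀ hu, Fintype.card_fin, ht]
    · exact ht ▸ le_condMatchProb_of_not_forall_true ε₀ hu
  have hsplit := sum_ite_add_sum_ite_not (fun u : Fin k → Bool => ∀ j, u j = true) q
  have hmain : t ^ k * (1 - αhat) + t * αhat ≤ matchProb ε₀ k q := by
    calc t ^ k * (1 - αhat) + t * αhat
        = ∑ u, q u * (if ∀ j, u j = true then t ^ k else t) := by
          rw [sum_mul_ite_eq, ← hαhat]; congr 2; linarith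
      _ ≤ ∑ u, q u * condMatchProb ε₀ u :=
          sum_le_sum fun u _ => mul_le_mul_of_nonneg_left (hcond u) (hq0 u)
      _ = matchProb ε₀ k q := (matchProb_eq_sum_condMatchProb ε₀ k q).symm
  have hα : 0 ≤ 1 - αhat := by
    have : 0 ≤ ∑ u : Fin k → Bool, if ∀ j, u j = true then q u else 0 :=
      sum_nonneg fun u _ => ite_nonneg (hq0 u) le_rfl
    linarith
  have ht0 : 0 ≤ t := ht ▸ by positivity
  have htail : 0 ≤ t ^ k * (1 - αhat) := mul_nonneg (pow_nonneg ht0 k) hα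
  refine ⟨hmain, by linarith, fun α δerr hαδ => ?_⟩
  rw [mul_assoc, ← hαδ]
  linarith

/-- with `t = e^{ε₀}/(e^{ε₀}+1)`, `b ∼ q` an arbitrary random
vector in `{0,1}^k`, `b̃` its coordinatewise random-response perturbation,
`ẑ`/`z̃` the all-ones indicators of `b`/`b̃`, and `α̂ = Pr[ẑ = 0]`:
`Pr[z̃ = ẑ] ≥ t^k (1 - α̂) + t α̂ ≥ t α̂`; in particular, if
`α̂ = α (1 - δ_err)` then `Pr[z̃ = ẑ] ≥ t α (1 - δ_err)`. -/
theorem stmt_13 (ε₀ : ℝ) (hε : 0 ≤ ε₀) (k : ℕ) (hk : 1 ≤ k)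
    (t : ℝ) (ht : t = Real.exp ε₀ / (Real.exp ε₀ + 1))
    (q : (Fin k → Bool) → ℝ) (hq0 : ∀ u, 0 ≤ q u) (hq1 : ∑ u, q u = 1)
    (αhat : ℝ) (hαhat : αhat = ∑ u, if ¬ (∀ j, u j = true) then q u else 0) :
    matchProb ε₀ k q ≥ t ^ k * (1 - αhat) + t * αhat ∧
    matchProb ε₀ k q ≥ t * αhat ∧
    (∀ α δerr : ℝ, αhat = α * (1 - δerr) →
      matchProb ε₀ k q ≥ t * α * (1 - δerr)) :=
  stmt_13_general ε₀ k t ht q hq0 hq1 αhat hαhat
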